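/- arXiv:1404.4655 — 4 statements merged into one kernel-verified Lean document; each statement's English description precedes it below -/
import Mathlib

section
/- Let X be a finite set and ũ a quasi-ultrametric on X. Fix δ ≥ 0 and let ~_δ be the equivalence relation x ~_δ x' iff max(ũ(x,x'), ũ(x',x)) ≤ δ, with equivalence classes [x]_δ. Define an edge between distinct classes B_1, B_2 iff min over x_1 ∈ B_1, x_2 ∈ B_2 of ũ(x_1, x_2) is ≤ δ. Then this edge relation is unidirectional: if there is an edge from B_1 to B_2 (B_1 ≠ B_2) then there is no edge from B_2 to B_1. -/
/-! The symmetrised distance `max (u x y) (u y x)` is again an ultrametric, so each `~_δ`-class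
is a closed ball of radius `δ` around any of its points. An edge `[a]_δ → [b]_δ` chains through
the two classes to give `u a b ≤ δ`; edges in both directions would give `a ~_δ b`, i.e. the same
class. -/

section

variable {X : Type*} {u : X → X → ℝ} {δ : ℝ}

def deltaClass (u : X → X → ℝ) (δ : ℝ) (x : X) : Set X :=
  {y | max (u x y) (u y x) ≤ δ}

theorem le_trans_of_max (hu : ∀ x x' x'', u x x' ≤ max (u x x'') (u x'' x')) {x y z : X}
    (hxy : u x y ≤ δ) (hyz : u y z ≤ δ) : u x z ≤ δ :=
  (hu x z y).trans (max_le hxy hyz)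

theorem deltaClass_subset_of_le (hu : ∀ x x' x'', u x x' ≤ max (u x x'') (u x'' x'))
    {a b : X} (hab : u a b ≤ δ) (hba : u b a ≤ δ) : deltaClass u δ a ⊆ deltaClass u δ b :=
  fun _ hz => max_le (le_trans_of_max hu hba (le_of_max_le_left hz))
    (le_trans_of_max hu (le_of_max_le_right hz) hab)

theorem deltaClass_eq_of_le (hu : ∀ x x' x'', u x x' ≤ max (u x x'') (u x'' x'))
    {a b : X} (hab : u a b ≤ δ) (hba : u b a ≤ δ) : deltaClass u δ a = deltaClass u δ b :=
  (deltaClass_subset_of_le hu hab hba).antisymm (deltaClass_subset_of_le hu hba hab)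

theorem le_of_mem_deltaClass (hu : ∀ x x' x'', u x x' ≤ max (u x x'') (u x'' x'))
    {a b x y : X} (hx : x ∈ deltaClass u δ a) (hy : y ∈ deltaClass u δ b) (hxy : u x y ≤ δ) :
    u a b ≤ δ :=
  le_trans_of_max hu (le_trans_of_max hu (le_of_max_le_left hx) hxy) (le_of_max_le_right hy)

end

theorem quasiUltrametric_edge_unidirectional_general {X : Type*}
    (u : X → X → ℝ)
    (hstri : ∀ x x' x'', u x x' ≤ max (u x x'') (u x'' x'))
    (δ : ℝ)
    (B₁ B₂ : Set X)
    (h₁ : ∃ x, B₁ = {y | max (u x y) (u y x) ≤ δ})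
    (h₂ : ∃ x, B₂ = {y | max (u x y) (u y x) ≤ δ})
    (hne : B₁ ≠ B₂)
    (hE : ∃ x₁ ∈ B₁, ∃ x₂ ∈ B₂, u x₁ x₂ ≤ δ) :
    ¬ ∃ x₂ ∈ B₂, ∃ x₁ ∈ B₁, u x₂ x₁ ≤ δ := by
  rintro ⟨y₂, hy₂, y₁, hy₁, hy⟩
  obtain ⟨x₁, hx₁, x₂, hx₂, hx⟩ := hE
  obtain ⟨a, rfl⟩ := h₁
  obtain ⟨b, rfl⟩ := h₂
  exact hne (deltaClass_eq_of_le hstri (le_of_mem_deltaClass hstri hx₁ hx₂ hx)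
    (le_of_mem_deltaClass hstri hy₂ hy₁ hy))

/-- For a quasi-ultrametric `u` and resolution `δ ≥ 0`, the edge
relation between distinct classes of `~_δ` (edge from `B₁` to `B₂` iff some
`x₁ ∈ B₁`, `x₂ ∈ B₂` have `u x₁ x₂ ≤ δ`) is unidirectional. -/
theorem quasiUltrametric_edge_unidirectional {X : Type*} [Fintype X]
    (u : X → X → ℝ)
    (hnonneg : ∀ x x', 0 ≤ u x x')
    (hid : ∀ x x', u x x' = 0 ↔ x = x')
    (hstri : ∀ x x' x'', u x x' ≤ max (u x x'') (u x'' x'))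
    (δ : ℝ) (hδ : 0 ≤ δ)
    (B₁ B₂ : Set X)
    (h₁ : ∃ x, B₁ = {y | max (u x y) (u y x) ≤ δ})
    (h₂ : ∃ x, B₂ = {y | max (u x y) (u y x) ≤ δ})
    (hne : B₁ ≠ B₂)
    (hE : ∃ x₁ ∈ B₁, ∃ x₂ ∈ B₂, u x₁ x₂ ≤ δ) :
    ¬ ∃ x₂ ∈ B₂, ∃ x₁ ∈ B₁, u x₂ x₁ ≤ δ :=
  quasiUltrametric_edge_unidirectional_general u hstri δ B₁ B₂ h₁ h₂ hne hE
end

section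
/- Let X be a finite set and ũ a quasi-ultrametric on X. Fix δ ≥ 0 with equivalence relation ~_δ (x ~_δ x' iff max(ũ(x,x'), ũ(x',x)) ≤ δ) and edges between distinct classes B_1 → B_2 iff min_{x_1 ∈ B_1, x_2 ∈ B_2} ũ(x_1, x_2) ≤ δ. Then the edge relation is transitive: if B_1 → B_2 and B_2 → B_3 for pairwise distinct classes, then B_1 → B_3. -/
/-! Any two points of the class `B₂` lie within `δ` of each other, both ways, through its centre;
so an edge into `B₂` and an edge out of it chain, by the strong triangle inequality, into an edge
from `B₁` to `B₃`. -/

section StrongTriangle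

variable {X : Type*} {u : X → X → ℝ} {δ : ℝ}

theorem le_trans_of_strong_triangle (hstri : ∀ x x' x'', u x x' ≤ max (u x x'') (u x'' x'))
    {x y z : X} (hxy : u x y ≤ δ) (hyz : u y z ≤ δ) : u x z ≤ δ :=
  (hstri x z y).trans (max_le hxy hyz)

theorem le_of_mem_class_of_strong_triangle
    (hstri : ∀ x x' x'', u x x' ≤ max (u x x'') (u x'' x')) {c y y' : X}
    (hy : y ∈ {y | max (u c y) (u y c) ≤ δ}) (hy' : y' ∈ {y | max (u c y) (u y c) ≤ δ}) :
    u y y' ≤ δ :=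
  le_trans_of_strong_triangle hstri (le_of_max_le_right hy) (le_of_max_le_left hy')

end StrongTriangle

theorem quasiUltrametric_edge_transitive_general {X : Type*}
    (u : X → X → ℝ)
    (hstri : ∀ x x' x'', u x x' ≤ max (u x x'') (u x'' x'))
    (δ : ℝ)
    (B₁ B₂ B₃ : Set X)
    (h₂ : ∃ x, B₂ = {y | max (u x y) (u y x) ≤ δ})
    (hE12 : ∃ x₁ ∈ B₁, ∃ x₂ ∈ B₂, u x₁ x₂ ≤ δ)
    (hE23 : ∃ x₂ ∈ B₂, ∃ x₃ ∈ B₃, u x₂ x₃ ≤ δ) :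
    ∃ x₁ ∈ B₁, ∃ x₃ ∈ B₃, u x₁ x₃ ≤ δ := by
  obtain ⟨c, rfl⟩ := h₂
  obtain ⟨x₁, hx₁, x₂, hx₂, h12⟩ := hE12
  obtain ⟨x₂', hx₂', x₃, hx₃, h23⟩ := hE23
  have h22' : u x₂ x₂' ≤ δ := le_of_mem_class_of_strong_triangle hstri hx₂ hx₂'
  exact ⟨x₁, hx₁, x₃, hx₃,
    le_trans_of_strong_triangle hstri h12 (le_trans_of_strong_triangle hstri h22' h23)⟩

/-- For a quasi-ultrametric `u` and resolution `δ ≥ 0`, the edge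
relation between distinct classes of `~_δ` is transitive: edges `B₁ → B₂` and
`B₂ → B₃` between pairwise distinct classes imply an edge `B₁ → B₃`. -/
theorem quasiUltrametric_edge_transitive {X : Type*} [Fintype X]
    (u : X → X → ℝ)
    (hnonneg : ∀ x x', 0 ≤ u x x')
    (hid : ∀ x x', u x x' = 0 ↔ x = x')
    (hstri : ∀ x x' x'', u x x' ≤ max (u x x'') (u x'' x'))
    (δ : ℝ) (hδ : 0 ≤ δ)
    (B₁ B₂ B₃ : Set X)
    (h₁ : ∃ x, B₁ = {y | max (u x y) (u y x) ≤ δ})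
    (h₂ : ∃ x, B₂ = {y | max (u x y) (u y x) ≤ δ})
    (h₃ : ∃ x, B₃ = {y | max (u x y) (u y x) ≤ δ})
    (hne12 : B₁ ≠ B₂) (hne23 : B₂ ≠ B₃) (hne13 : B₁ ≠ B₃)
    (hE12 : ∃ x₁ ∈ B₁, ∃ x₂ ∈ B₂, u x₁ x₂ ≤ δ)
    (hE23 : ∃ x₂ ∈ B₂, ∃ x₃ ∈ B₃, u x₂ x₃ ≤ δ) :
    ∃ x₁ ∈ B₁, ∃ x₃ ∈ B₃, u x₁ x₃ ≤ δ :=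
  quasiUltrametric_edge_transitive_general u hstri δ B₁ B₂ B₃ h₂ hE12 hE23
end

section
/- Let (X, A_X) be a finite network and ũ* the directed minimum chain cost. For any δ > 0 and any pair x, x' ∈ X with ũ*(x,x') ≥ δ, there exists a partition of X into two blocks B and B' with x ∈ B and x' ∈ B' such that A_X(b, b') ≥ δ for all b ∈ B and b' ∈ B'. -/
/-- The cost of a chain: maximum dissimilarity over consecutive links. -/
def chainCost {X : Type*} (A : X → X → ℝ) : List X → ℝ
  | [] => 0
  | [_] => 0
  | a :: b :: rest => max (A a b) (chainCost A (b :: rest))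

/-- The directed minimum chain cost `ũ*` of a network `(X, A)`: the minimum,
over all chains from `x` to `x'`, of the maximum link dissimilarity. -/
noncomputable def dmcc {X : Type*} (A : X → X → ℝ) (x x' : X) : ℝ :=
  sInf {r | ∃ c : List X, c.head? = some x ∧ c.getLast? = some x' ∧ chainCost A c = r}

/-!
Let `B` be the set of points reachable from `x` by chains of cost `< δ`. Appending one link
`b → b'` to a chain shows `ũ*(x, b') ≤ max (ũ*(x, b)) (A b b')`, so a link of dissimilarity
`< δ` from `B` never leaves `B`. Hence `B ∋ x` and its complement `∋ x'` are separated by `δ`.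
-/

section

variable {X : Type*} {A : X → X → ℝ}

theorem chainCost_nonneg (hA : ∀ a b, 0 ≤ A a b) : ∀ c : List X, 0 ≤ chainCost A c
  | [] | [_] => le_rfl
  | _ :: b :: rest => (chainCost_nonneg hA (b :: rest)).trans (le_max_right _ _)

theorem chainCost_append_pair (y z : X) :
    ∀ c : List X, chainCost A (c ++ [y, z]) = max (chainCost A (c ++ [y])) (A y z)
  | [] => max_comm _ _
  | [a] => by simp only [List.singleton_append, chainCost]; ac_rfl
  | a :: b :: rest => by
    simp only [List.cons_append, chainCost]
    rw [← List.cons_append, chainCost_append_pair y z (b :: rest), List.cons_append, max_assoc]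

theorem dmcc_le_chainCost (hA : ∀ a b, 0 ≤ A a b) {x y : X} {c : List X}
    (hhead : c.head? = some x) (hlast : c.getLast? = some y) : dmcc A x y ≤ chainCost A c :=
  csInf_le ⟨0, fun _ ⟨c, _, _, hc⟩ => hc ▸ chainCost_nonneg hA c⟩ ⟨c, hhead, hlast, rfl⟩

theorem dmcc_le_max (hA : ∀ a b, 0 ≤ A a b) (x y z : X) :
    dmcc A x z ≤ max (dmcc A x y) (A y z) := by
  rcases le_or_gt (dmcc A x z) (A y z) with hle | hlt
  · exact le_max_of_le_right hle
  refine le_max_of_le_left (le_csInf ⟨_, [x, y], rfl, rfl, rfl⟩ ?_)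
  rintro _ ⟨c, hhead, hlast, rfl⟩
  have hc : c.dropLast ++ [y] = c := List.dropLast_append_getLast? y hlast
  have hextend : dmcc A x z ≤ max (chainCost A c) (A y z) := by
    rw [← hc, ← chainCost_append_pair]
    refine dmcc_le_chainCost hA ?_ (by simp)
    rw [← hc] at hhead
    simpa [List.head?_append] using hhead
  exact (le_max_iff.mp hextend).resolve_right hlt.not_ge

end

theorem dmcc_separating_partition_general {X : Type*}
    (A : X → X → ℝ)
    (hnonneg : ∀ x x', 0 ≤ A x x')
    (δ : ℝ) (hδ : 0 < δ)
    (x x' : X) (h : δ ≤ dmcc A x x') :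
    ∃ B B' : Set X, B ∪ B' = Set.univ ∧ B ∩ B' = ∅ ∧ x ∈ B ∧ x' ∈ B' ∧
      ∀ b ∈ B, ∀ b' ∈ B', δ ≤ A b b' := by
  refine ⟨{y | dmcc A x y < δ}, {y | dmcc A x y < δ}ᶜ, Set.union_compl_self _,
    Set.inter_compl_self _, ?_, h.not_gt, ?_⟩
  · exact (dmcc_le_chainCost (c := [x]) hnonneg rfl rfl).trans_lt hδ
  · intro b hb b' hb'
    exact le_of_not_gt fun hlt => hb' ((dmcc_le_max hnonneg x b b').trans_lt (max_lt hb hlt))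

/-- If the directed minimum chain cost from `x` to `x'` is at
least `δ > 0`, then `X` splits into two blocks `B ∋ x` and `B' ∋ x'` with all
dissimilarities from `B` to `B'` at least `δ`. -/
theorem dmcc_separating_partition {X : Type*} [Fintype X]
    (A : X → X → ℝ)
    (hnonneg : ∀ x x', 0 ≤ A x x')
    (hid : ∀ x x', A x x' = 0 ↔ x = x')
    (δ : ℝ) (hδ : 0 < δ)
    (x x' : X) (h : δ ≤ dmcc A x x') :
    ∃ B B' : Set X, B ∪ B' = Set.univ ∧ B ∩ B' = ∅ ∧ x ∈ B ∧ x' ∈ B' ∧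
      ∀ b ∈ B, ∀ b' ∈ B', δ ≤ A b b' :=
  dmcc_separating_partition_general A hnonneg δ hδ x x' h
end

section
/- Define the network distance between finite networks N_X = (X, A_X) and N_Y = (Y, A_Y) as d_N(N_X, N_Y) = (1/2) min_R max_{(x,y),(x',y') ∈ R} |A_X(x,x') − A_Y(y,y')|, where R ranges over correspondences between X and Y. Then d_N satisfies the triangle inequality: d_N(N_X, N_Y) ≤ d_N(N_X, N_Z) + d_N(N_Z, N_Y) for all finite networks N_X, N_Y, N_Z. -/
/-- A correspondence between `X` and `Y`: a relation projecting onto both. -/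
def IsCorrespondence {X Y : Type*} (R : Set (X × Y)) : Prop :=
  (∀ x : X, ∃ y : Y, (x, y) ∈ R) ∧ (∀ y : Y, ∃ x : X, (x, y) ∈ R)

/-- The distortion of a correspondence `R` between networks `(X, AX)` and
`(Y, AY)`. -/
noncomputable def distortion {X Y : Type*} (AX : X → X → ℝ) (AY : Y → Y → ℝ)
    (R : Set (X × Y)) : ℝ :=
  sSup {r | ∃ p ∈ R, ∃ q ∈ R, r = |AX p.1 q.1 - AY p.2 q.2|}

/-- The network distance: half the minimal distortion over correspondences. -/
noncomputable def netDist {X Y : Type*} (AX : X → X → ℝ) (AY : Y → Y → ℝ) : ℝ :=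
  (1/2) * sInf {r | ∃ R : Set (X × Y), IsCorrespondence R ∧ r = distortion AX AY R}

/-!
Compose optimal correspondences `R` between `X`, `Z` and `S` between `Z`, `Y`: the composite
`R ○ S` is a correspondence between `X` and `Y`, and for `x ~ z ~ y`, `x' ~ z' ~ y'` the triangle
inequality in `ℝ` through `AZ z z'` bounds its distortion by `dis R + dis S`.
-/

open SetRel

section

variable {X Y Z : Type*}

theorem IsCorrespondence.comp {R : SetRel X Z} {S : SetRel Z Y} (hR : IsCorrespondence R)
    (hS : IsCorrespondence S) : IsCorrespondence (R ○ S) := by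
  constructor
  · intro x
    obtain ⟨z, hxz⟩ := hR.1 x
    obtain ⟨y, hzy⟩ := hS.1 z
    exact ⟨y, prodMk_mem_comp hxz hzy⟩
  · intro y
    obtain ⟨z, hzy⟩ := hS.2 y
    obtain ⟨x, hxz⟩ := hR.2 z
    exact ⟨x, prodMk_mem_comp hxz hzy⟩

theorem isCorrespondence_univ [Nonempty X] [Nonempty Y] :
    IsCorrespondence (Set.univ : Set (X × Y)) :=
  ⟨fun _ ↦ ⟨Classical.arbitrary Y, trivial⟩, fun _ ↦ ⟨Classical.arbitrary X, trivial⟩⟩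

variable (AX : X → X → ℝ) (AY : Y → Y → ℝ) (AZ : Z → Z → ℝ)

theorem distortion_nonneg (R : Set (X × Y)) : 0 ≤ distortion AX AY R :=
  Real.sSup_nonneg <| by
    rintro r ⟨p, -, q, -, rfl⟩
    exact abs_nonneg _

theorem abs_sub_le_distortion [Finite X] [Finite Y] {R : Set (X × Y)} {p q : X × Y}
    (hp : p ∈ R) (hq : q ∈ R) : |AX p.1 q.1 - AY p.2 q.2| ≤ distortion AX AY R := by
  have hfin : {r | ∃ p ∈ R, ∃ q ∈ R, r = |AX p.1 q.1 - AY p.2 q.2|}.Finite :=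
    (Set.finite_range fun pq : (X × Y) × (X × Y) ↦ |AX pq.1.1 pq.2.1 - AY pq.1.2 pq.2.2|).subset
      (by rintro r ⟨p, -, q, -, rfl⟩; exact ⟨(p, q), rfl⟩)
  exact le_csSup hfin.bddAbove ⟨p, hp, q, hq, rfl⟩

theorem distortion_le {R : Set (X × Y)} {b : ℝ} (hb : 0 ≤ b)
    (h : ∀ p ∈ R, ∀ q ∈ R, |AX p.1 q.1 - AY p.2 q.2| ≤ b) : distortion AX AY R ≤ b :=
  Real.sSup_le (by rintro r ⟨p, hp, q, hq, rfl⟩; exact h p hp q hq) hb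

theorem distortion_comp_le [Finite X] [Finite Y] [Finite Z] (R : SetRel X Z) (S : SetRel Z Y) :
    distortion AX AY (R ○ S) ≤ distortion AX AZ R + distortion AZ AY S := by
  refine distortion_le AX AY (add_nonneg (distortion_nonneg ..) (distortion_nonneg ..)) ?_
  rintro ⟨x, y⟩ ⟨z, hxz, hzy⟩ ⟨x', y'⟩ ⟨z', hxz', hzy'⟩
  calc |AX x x' - AY y y'|
      ≤ |AX x x' - AZ z z'| + |AZ z z' - AY y y'| := abs_sub_le _ _ _
    _ ≤ distortion AX AZ R + distortion AZ AY S :=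
      add_le_add (abs_sub_le_distortion AX AZ hxz hxz') (abs_sub_le_distortion AZ AY hzy hzy')

theorem netDist_le_of_isCorrespondence {R : Set (X × Y)} (hR : IsCorrespondence R) :
    netDist AX AY ≤ 1 / 2 * distortion AX AY R := by
  refine mul_le_mul_of_nonneg_left (csInf_le ⟨0, ?_⟩ ⟨R, hR, rfl⟩) (by norm_num)
  rintro r ⟨R', -, rfl⟩
  exact distortion_nonneg AX AY R'

theorem exists_isCorrespondence_netDist_eq [Finite X] [Finite Y] [Nonempty X] [Nonempty Y] :
    ∃ R : Set (X × Y), IsCorrespondence R ∧ netDist AX AY = 1 / 2 * distortion AX AY R := by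
  set D := {r | ∃ R : Set (X × Y), IsCorrespondence R ∧ r = distortion AX AY R}
  have hfin : D.Finite :=
    (Set.finite_range (distortion AX AY)).subset (by rintro r ⟨R, -, rfl⟩; exact ⟨R, rfl⟩)
  have hne : D.Nonempty := ⟨_, Set.univ, isCorrespondence_univ, rfl⟩
  obtain ⟨R, hR, hmin⟩ := hne.csInf_mem hfin
  exact ⟨R, hR, by rw [netDist, hmin]⟩

end

theorem netDist_triangle_general {X Y Z : Type*}
    [Fintype X] [Fintype Y] [Fintype Z] [Nonempty X] [Nonempty Y] [Nonempty Z]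
    (AX : X → X → ℝ) (AY : Y → Y → ℝ) (AZ : Z → Z → ℝ) :
    netDist AX AY ≤ netDist AX AZ + netDist AZ AY := by
  obtain ⟨R, hR, hXZ⟩ := exists_isCorrespondence_netDist_eq AX AZ
  obtain ⟨S, hS, hZY⟩ := exists_isCorrespondence_netDist_eq AZ AY
  calc netDist AX AY
      ≤ 1 / 2 * distortion AX AY (R ○ S) := netDist_le_of_isCorrespondence AX AY (hR.comp hS)
    _ ≤ 1 / 2 * (distortion AX AZ R + distortion AZ AY S) := by
      gcongr; exact distortion_comp_le AX AY AZ R S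
    _ = netDist AX AZ + netDist AZ AY := by rw [hXZ, hZY]; ring

/-- The network distance satisfies the triangle inequality. -/
theorem netDist_triangle {X Y Z : Type*}
    [Fintype X] [Fintype Y] [Fintype Z] [Nonempty X] [Nonempty Y] [Nonempty Z]
    (AX : X → X → ℝ) (AY : Y → Y → ℝ) (AZ : Z → Z → ℝ)
    (hXnonneg : ∀ x x', 0 ≤ AX x x') (hXid : ∀ x x', AX x x' = 0 ↔ x = x')
    (hYnonneg : ∀ y y', 0 ≤ AY y y') (hYid : ∀ y y', AY y y' = 0 ↔ y = y')
    (hZnonneg : ∀ z z', 0 ≤ AZ z z') (hZid : ∀ z z', AZ z z' = 0 ↔ z = z') :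
    netDist AX AY ≤ netDist AX AZ + netDist AZ AY :=
  netDist_triangle_general AX AY AZ
end
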